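/- arXiv:1611.03052 — 5 statements merged into one kernel-verified Lean document; each statement's English description precedes it below -/
import Mathlib

section
/- For every k ≥ 3 one has a k = s 1 · a (k−1) − a (k−2), and likewise b k = s 1 · b (k−1) − b (k−2). -/
/-! The progression relations express `a (j+3) - s 1 * a (j+2) + a (j+1)` through the quantity
`s (j+1) * b 1 + 2 * a (j+1) - s j * a 1 - s 1 * b (j+1)`. Substituting the progression relations
once more turns this quantity for `(a, b)` at `j + 1` into the same quantity for `(b, a)` at `j`,
and at `j = 0` it vanishes because `s 0 = 2`; hence it vanishes identically. -/

section Progression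

variable {R : Type*} [CommRing R] {s : ℕ → R}

theorem progression_add_two {a b : ℕ → R} (ha : ∀ k, 2 ≤ k → a k = s (k - 1) * a 1 + b (k - 1))
    (j : ℕ) : a (j + 2) = s (j + 1) * a 1 + b (j + 1) :=
  ha (j + 2) (by omega)

theorem progression_conserved (hs0 : s 0 = 2) (hrec : ∀ k, s (k + 2) = s 1 * s (k + 1) - s k)
    (j : ℕ) {a b : ℕ → R}
    (ha : ∀ k, 2 ≤ k → a k = s (k - 1) * a 1 + b (k - 1))
    (hb : ∀ k, 2 ≤ k → b k = s (k - 1) * b 1 + a (k - 1)) :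
    s (j + 1) * b 1 + 2 * a (j + 1) = s j * a 1 + s 1 * b (j + 1) := by
  induction j generalizing a b with
  | zero => rw [hs0]; ring
  | succ j ih =>
    rw [progression_add_two ha, progression_add_two hb, hrec j]
    linear_combination ih hb ha

theorem three_term_of_progression (hs0 : s 0 = 2) (hrec : ∀ k, s (k + 2) = s 1 * s (k + 1) - s k)
    {a b : ℕ → R} (ha : ∀ k, 2 ≤ k → a k = s (k - 1) * a 1 + b (k - 1))
    (hb : ∀ k, 2 ≤ k → b k = s (k - 1) * b 1 + a (k - 1)) (j : ℕ) :
    a (j + 3) = s 1 * a (j + 2) - a (j + 1) := by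
  rw [progression_add_two ha (j + 1), progression_add_two ha, progression_add_two hb, hrec j]
  linear_combination progression_conserved hs0 hrec j ha hb

end Progression

/-- for every `k ≥ 3`, `a k = s 1 · a (k−1) − a (k−2)` and likewise
`b k = s 1 · b (k−1) − b (k−2)`. -/
theorem three_term_recurrence {R : Type*} [CommRing R]
    (s a b : ℕ → R)
    (hs0 : s 0 = 2)
    (ha : ∀ k : ℕ, 2 ≤ k → a k = s (k - 1) * a 1 + b (k - 1))
    (hb : ∀ k : ℕ, 2 ≤ k → b k = s (k - 1) * b 1 + a (k - 1))
    (hrec : ∀ k : ℕ, s (k + 2) = s 1 * s (k + 1) - s k) :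
    ∀ k : ℕ, 3 ≤ k →
      a k = s 1 * a (k - 1) - a (k - 2) ∧ b k = s 1 * b (k - 1) - b (k - 2) := by
  intro k hk
  obtain ⟨j, rfl⟩ : ∃ j, k = j + 3 := ⟨k - 3, by omega⟩
  exact ⟨three_term_of_progression hs0 hrec ha hb j, three_term_of_progression hs0 hrec hb ha j⟩
end

section
/- Define B : ℤ → R by B t = b t for t ≥ 1 and B t = − a (1 − t) for t ≤ 0 (the paper's kink convention x(γ_{−r}^C) = − x(γ_{r+1}) for r ≥ 0). Then the doubly infinite sequence B satisfies the three-term recurrence B (t+1) = s 1 · B t − B (t−1) for every integer t ∈ ℤ. -/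
/-!
In terms of `B`, the progression relations read `B (m + j) + B (m - j) = s j * B m` for
`m = 0` (the relation for `a`, thanks to the sign in `B t = -a (1 - t)`) and `m = 1` (the
relation for `b`), the case `j = 0` being `s 0 = 2`. Summing three consecutive instances with
the weights of `s (j + 2) - s 1 * s (j + 1) + s j = 0` shows that the defect
`δ t = B (t + 1) - s 1 * B t + B (t - 1)` is odd about `0` and about `1`, hence `2`-periodic;
and `δ 0 = δ 1 = 0` are the instances `j = 1`.
-/

section ChebyshevRecurrence

variable {R : Type*} [CommRing R]

def recurrenceDefect (c : R) (B : ℤ → R) (t : ℤ) : R :=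
  B (t + 1) - c * B t + B (t - 1)

def IsChebyshevSymmetricAt (s : ℕ → R) (B : ℤ → R) (m : ℤ) : Prop :=
  ∀ j : ℕ, B (m + j) + B (m - j) = s j * B m

variable {s : ℕ → R} {B : ℤ → R} {m : ℤ}

theorem IsChebyshevSymmetricAt.recurrenceDefect_self (h : IsChebyshevSymmetricAt s B m) :
    recurrenceDefect (s 1) B m = 0 := by
  have h1 := h 1
  push_cast at h1
  unfold recurrenceDefect
  linear_combination h1

theorem IsChebyshevSymmetricAt.recurrenceDefect_add_add_sub_succ
    (hrec : ∀ k, s (k + 2) = s 1 * s (k + 1) - s k) (h : IsChebyshevSymmetricAt s B m)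
    (j : ℕ) :
    recurrenceDefect (s 1) B (m + (j + 1)) + recurrenceDefect (s 1) B (m - (j + 1)) = 0 := by
  have h0 := h j
  have h1 := h (j + 1)
  have h2 := h (j + 2)
  push_cast at h1 h2
  unfold recurrenceDefect
  linear_combination (norm := ring_nf) h2 - s 1 * h1 + h0 + B m * hrec j

theorem IsChebyshevSymmetricAt.recurrenceDefect_add_eq_neg
    (hrec : ∀ k, s (k + 2) = s 1 * s (k + 1) - s k) (h : IsChebyshevSymmetricAt s B m)
    (j : ℤ) :
    recurrenceDefect (s 1) B (m + j) = -recurrenceDefect (s 1) B (m - j) := by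
  rcases j with (_ | n) | n
  · simp [h.recurrenceDefect_self]
  · simp only [Int.ofNat_eq_natCast, Nat.cast_succ]
    linear_combination h.recurrenceDefect_add_add_sub_succ hrec n
  · rw [Int.negSucc_eq, sub_neg_eq_add, ← sub_eq_add_neg]
    linear_combination h.recurrenceDefect_add_add_sub_succ hrec n

theorem add_one_eq_of_isChebyshevSymmetricAt_zero_one
    (hrec : ∀ k, s (k + 2) = s 1 * s (k + 1) - s k)
    (h₀ : IsChebyshevSymmetricAt s B 0) (h₁ : IsChebyshevSymmetricAt s B 1) (t : ℤ) :
    B (t + 1) = s 1 * B t - B (t - 1) := by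
  have hperiodic : Function.Periodic (recurrenceDefect (s 1) B) 2 := fun t => by
    calc recurrenceDefect (s 1) B (t + 2)
        = -recurrenceDefect (s 1) B (0 + -t) := by
          rw [show t + 2 = 1 + (t + 1) by ring, h₁.recurrenceDefect_add_eq_neg hrec]
          ring_nf
      _ = recurrenceDefect (s 1) B t := by
          rw [h₀.recurrenceDefect_add_eq_neg hrec]
          simp
  have hdefect : recurrenceDefect (s 1) B t = 0 := by
    rw [← hperiodic.sub_int_mul_eq (t / 2), Int.cast_id, mul_comm, ← Int.emod_def]
    rcases Int.emod_two_eq_zero_or_one t with h | h <;> rw [h]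
    · exact h₀.recurrenceDefect_self
    · exact h₁.recurrenceDefect_self
  unfold recurrenceDefect at hdefect
  linear_combination hdefect

variable {a b : ℕ → R} (hs0 : s 0 = 2) (hpos : ∀ n : ℕ, B (n + 1) = b (n + 1))
  (hneg : ∀ n : ℕ, B (-n) = -a (n + 1))
include hs0 hpos hneg

theorem isChebyshevSymmetricAt_zero_of_progression
    (ha : ∀ n : ℕ, a (n + 2) = s (n + 1) * a 1 + b (n + 1)) :
    IsChebyshevSymmetricAt s B 0 := by
  have hB0 : B 0 = -a 1 := by simpa using hneg 0
  rintro (_ | n)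
  · simp only [Nat.cast_zero, add_zero, sub_zero, hs0]; ring
  · rw [zero_add, zero_sub, hneg, Nat.cast_succ, hpos, hB0, ha]
    ring

theorem isChebyshevSymmetricAt_one_of_progression
    (hb : ∀ n : ℕ, b (n + 2) = s (n + 1) * b 1 + a (n + 1)) :
    IsChebyshevSymmetricAt s B 1 := by
  have hB1 : B 1 = b 1 := by simpa using hpos 0
  rintro (_ | n)
  · simp only [Nat.cast_zero, add_zero, sub_zero, hs0]; ring
  · rw [show (1 : ℤ) + ↑(n + 1) = ↑(n + 1) + 1 by push_cast; ring,
      show (1 : ℤ) - ↑(n + 1) = -↑n by push_cast; ring, hpos, hneg, hB1, hb]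
    ring

end ChebyshevRecurrence

/-- the doubly infinite extension `B : ℤ → R` of `b` (with the kink
convention `B t = −a (1 − t)` for `t ≤ 0`) satisfies the three-term recurrence
`B (t+1) = s 1 · B t − B (t−1)` for every `t ∈ ℤ`. -/
theorem extended_sequence_recurrence {R : Type*} [CommRing R]
    (s a b : ℕ → R) (B : ℤ → R)
    (hs0 : s 0 = 2)
    (ha : ∀ k : ℕ, 2 ≤ k → a k = s (k - 1) * a 1 + b (k - 1))
    (hb : ∀ k : ℕ, 2 ≤ k → b k = s (k - 1) * b 1 + a (k - 1))
    (hrec : ∀ k : ℕ, s (k + 2) = s 1 * s (k + 1) - s k)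
    (hB1 : ∀ t : ℤ, 1 ≤ t → B t = b t.toNat)
    (hB0 : ∀ t : ℤ, t ≤ 0 → B t = - a (1 - t).toNat) :
    ∀ t : ℤ, B (t + 1) = s 1 * B t - B (t - 1) := by
  have hpos (n : ℕ) : B (n + 1) = b (n + 1) := by
    rw [hB1 _ (by omega)]; congr
  have hneg (n : ℕ) : B (-n) = -a (n + 1) := by
    rw [hB0 _ (by omega)]; congr; omega
  exact add_one_eq_of_isChebyshevSymmetricAt_zero_one hrec
    (isChebyshevSymmetricAt_zero_of_progression hs0 hpos hneg fun n => ha (n + 2) (by omega))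
    (isChebyshevSymmetricAt_one_of_progression hs0 hpos hneg fun n => hb (n + 2) (by omega))
end

section
/- Define c : ℕ → R by c 0 = a 1 − b 1 and c k = a k − b k for every k ≥ 1. Then for every k ≥ 2 one has c k = (s (k−1) − s (k−2)) · c 1 + c (k−2). -/
/-!
Subtracting the two progression relations shows that the differences satisfy the three-term
recurrence `c (k + 1) = s k * c 1 - c k`; at `k = 0` this is exactly `s 0 = 2` together with the
convention `c 0 = c 1`. Applying the recurrence twice and eliminating `c (k + 1)` gives the claim.
-/

section ThreeTerm

variable {R : Type*} [CommRing R]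

theorem sub_succ_eq_of_progression {s a b : ℕ → R} {k : ℕ}
    (ha : a (k + 1) = s k * a 1 + b k) (hb : b (k + 1) = s k * b 1 + a k) :
    a (k + 1) - b (k + 1) = s k * (a 1 - b 1) - (a k - b k) := by
  rw [ha, hb]
  ring

theorem add_two_eq_of_three_term {s c : ℕ → R} (hrec : ∀ k, c (k + 1) = s k * c 1 - c k) (k : ℕ) :
    c (k + 2) = (s (k + 1) - s k) * c 1 + c k := by
  rw [hrec (k + 1), hrec k]
  ring

end ThreeTerm

/-- with `c 0 = a 1 − b 1` and `c k = a k − b k` for `k ≥ 1`, one has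
`c k = (s (k−1) − s (k−2)) · c 1 + c (k−2)` for every `k ≥ 2`. -/
theorem complementary_difference_recurrence {R : Type*} [CommRing R]
    (s a b c : ℕ → R)
    (hs0 : s 0 = 2)
    (ha : ∀ k : ℕ, 2 ≤ k → a k = s (k - 1) * a 1 + b (k - 1))
    (hb : ∀ k : ℕ, 2 ≤ k → b k = s (k - 1) * b 1 + a (k - 1))
    (hc0 : c 0 = a 1 - b 1)
    (hc : ∀ k : ℕ, 1 ≤ k → c k = a k - b k) :
    ∀ k : ℕ, 2 ≤ k → c k = (s (k - 1) - s (k - 2)) * c 1 + c (k - 2) := by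
  have hc1 : c 1 = a 1 - b 1 := hc 1 le_rfl
  have hrec : ∀ k, c (k + 1) = s k * c 1 - c k := by
    rintro (_ | k)
    · rw [hs0, hc0, hc1]
      ring
    · rw [hc (k + 2) (by omega), hc (k + 1) (by omega), hc1]
      exact sub_succ_eq_of_progression (by simpa using ha (k + 2) (by omega))
        (by simpa using hb (k + 2) (by omega))
  rintro k hk
  obtain ⟨n, rfl⟩ := Nat.exists_eq_add_of_le' hk
  simpa using add_two_eq_of_three_term hrec n
end

section
/- Define c : ℕ → R by c k = a k − b k for every k ≥ 1. Then for every even k ≥ 2 one has c k = c 1 · (1 + Σ_{i=0}^{k−1} (−1)^{i+1} · s i). -/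
/-!
Subtracting the two progression relations gives the recurrence `c (k + 1) = s k * c 1 - c k`
for `k ≥ 1`. Unrolling it yields `c k = (-1) ^ k * c 1 * (1 + ∑_{i < k} (-1) ^ (i + 1) * s i)`
for all `k ≥ 1` (at `k = 1` this is `s 0 = 2`), and the sign disappears for even `k`.
-/

theorem sub_succ_eq_mul_sub_of_progression {R : Type*} [CommRing R] {s a b : ℕ → R}
    (ha : ∀ k : ℕ, 2 ≤ k → a k = s (k - 1) * a 1 + b (k - 1))
    (hb : ∀ k : ℕ, 2 ≤ k → b k = s (k - 1) * b 1 + a (k - 1)) {n : ℕ} (hn : 1 ≤ n) :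
    a (n + 1) - b (n + 1) = s n * (a 1 - b 1) - (a n - b n) := by
  rw [ha (n + 1) (by omega), hb (n + 1) (by omega), Nat.add_sub_cancel]
  ring

theorem eq_neg_one_pow_mul_of_succ_eq_mul_sub {R : Type*} [CommRing R] {s c : ℕ → R}
    (hs0 : s 0 = 2) (hrec : ∀ n : ℕ, 1 ≤ n → c (n + 1) = s n * c 1 - c n) {k : ℕ} (hk : 1 ≤ k) :
    c k = (-1) ^ k * c 1 * (1 + ∑ i ∈ Finset.range k, (-1 : R) ^ (i + 1) * s i) := by
  induction k, hk using Nat.le_induction with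
  | base =>
    rw [Finset.sum_range_one, hs0]
    ring
  | succ n hn ih =>
    have hsq : (-1 : R) ^ n * (-1) ^ n = 1 := by
      rw [← pow_add, ← two_mul, pow_mul, neg_one_sq, one_pow]
    rw [hrec n hn, ih, Finset.sum_range_succ]
    linear_combination -(s n * c 1) * hsq

/-- with `c k = a k − b k` for `k ≥ 1`, for every even `k ≥ 2` one has
`c k = c 1 · (1 + Σ_{i=0}^{k−1} (−1)^{i+1} · s i)`. -/
theorem complementary_difference_even {R : Type*} [CommRing R]
    (s a b c : ℕ → R)
    (hs0 : s 0 = 2)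
    (ha : ∀ k : ℕ, 2 ≤ k → a k = s (k - 1) * a 1 + b (k - 1))
    (hb : ∀ k : ℕ, 2 ≤ k → b k = s (k - 1) * b 1 + a (k - 1))
    (hc : ∀ k : ℕ, 1 ≤ k → c k = a k - b k) :
    ∀ k : ℕ, 2 ≤ k → Even k →
      c k = c 1 * (1 + ∑ i ∈ Finset.range k, (-1 : R) ^ (i + 1) * s i) := by
  intro k hk hke
  have hrec : ∀ n : ℕ, 1 ≤ n → c (n + 1) = s n * c 1 - c n := fun n hn => by
    rw [hc (n + 1) (by omega), hc n hn, hc 1 le_rfl]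
    exact sub_succ_eq_mul_sub_of_progression ha hb hn
  rw [eq_neg_one_pow_mul_of_succ_eq_mul_sub hs0 hrec (by omega), hke.neg_one_pow, one_mul]
end

section
/- Define c : ℕ → R by c k = a k − b k for every k ≥ 1. Then for every odd k ≥ 1 one has c k = c 1 · (1 + Σ_{i=1}^{k−1} (−1)^{i} · s i). -/
/-! Subtracting the two progression relations gives the three-term recurrence
`c (n + 1) = s n * c 1 - c n`, whose solution is
`c (k + 1) = (-1) ^ k * c 1 * (1 + ∑_{i=1}^{k} (-1) ^ i * s i)`; for odd `k + 1` the sign is `1`. -/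

open Finset

theorem complementary_difference_succ {R : Type*} [CommRing R] (s a b c : ℕ → R)
    (ha : ∀ k : ℕ, 2 ≤ k → a k = s (k - 1) * a 1 + b (k - 1))
    (hb : ∀ k : ℕ, 2 ≤ k → b k = s (k - 1) * b 1 + a (k - 1))
    (hc : ∀ k : ℕ, 1 ≤ k → c k = a k - b k) {n : ℕ} (hn : 1 ≤ n) :
    c (n + 1) = s n * c 1 - c n := by
  rw [hc (n + 1) (by omega), ha (n + 1) (by omega), hb (n + 1) (by omega), hc n hn, hc 1 le_rfl,
    Nat.add_sub_cancel]
  ring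

theorem eq_neg_one_pow_mul_alternating_sum {R : Type*} [CommRing R] (s c : ℕ → R)
    (hrec : ∀ n : ℕ, 1 ≤ n → c (n + 1) = s n * c 1 - c n) (k : ℕ) :
    c (k + 1) = (-1) ^ k * c 1 * (1 + ∑ i ∈ Icc 1 k, (-1) ^ i * s i) := by
  induction k with
  | zero => simp
  | succ k ih =>
    have hsign : ((-1 : R) ^ k) ^ 2 = 1 := by rw [← pow_mul, mul_comm, pow_mul, neg_one_sq, one_pow]
    rw [hrec (k + 1) (by omega), ih, sum_Icc_succ_top (by omega), pow_succ]
    linear_combination (-(c 1 * s (k + 1))) * hsign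

theorem complementary_difference_odd_general {R : Type*} [CommRing R]
    (s a b c : ℕ → R)
    (ha : ∀ k : ℕ, 2 ≤ k → a k = s (k - 1) * a 1 + b (k - 1))
    (hb : ∀ k : ℕ, 2 ≤ k → b k = s (k - 1) * b 1 + a (k - 1))
    (hc : ∀ k : ℕ, 1 ≤ k → c k = a k - b k) :
    ∀ k : ℕ, 1 ≤ k → Odd k →
      c k = c 1 * (1 + ∑ i ∈ Finset.Icc 1 (k - 1), (-1 : R) ^ i * s i) := by
  rintro k - ⟨m, rfl⟩
  rw [eq_neg_one_pow_mul_alternating_sum s c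
      (fun n hn => complementary_difference_succ s a b c ha hb hc hn),
    (even_two_mul m).neg_one_pow, one_mul, Nat.add_sub_cancel]

/-- with `c k = a k − b k` for `k ≥ 1`, for every odd `k ≥ 1` one has
`c k = c 1 · (1 + Σ_{i=1}^{k−1} (−1)^{i} · s i)`. -/
theorem complementary_difference_odd {R : Type*} [CommRing R]
    (s a b c : ℕ → R)
    (hs0 : s 0 = 2)
    (ha : ∀ k : ℕ, 2 ≤ k → a k = s (k - 1) * a 1 + b (k - 1))
    (hb : ∀ k : ℕ, 2 ≤ k → b k = s (k - 1) * b 1 + a (k - 1))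
    (hc : ∀ k : ℕ, 1 ≤ k → c k = a k - b k) :
    ∀ k : ℕ, 1 ≤ k → Odd k →
      c k = c 1 * (1 + ∑ i ∈ Finset.Icc 1 (k - 1), (-1 : R) ^ i * s i) :=
  complementary_difference_odd_general s a b c ha hb hc
end
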